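/- arXiv:2410.01489 — 2 statements merged into one kernel-verified Lean document; each statement's English description precedes it below -/
import Mathlib

section
/- Let (Ω,ρ) be a compact metric space and K : Ω × Ω → [0,∞] a symmetric extended-continuous kernel. If μ is a minimizing Borel probability measure for the energy I_K with I_K(μ) < ∞, then the set {x ∈ Ω : U_K^μ(x) < I_K(μ)} has K-capacity zero; i.e., every Borel probability measure ν supported in this set has I_K(ν) = ∞. -/
open MeasureTheory Metric Set ENNReal

/-- The potential of a measure `μ` with respect to a kernel `K`. -/
noncomputable def pot {Ω : Type*} [MeasurableSpace Ω] (K : Ω → Ω → ℝ≥0∞)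
    (μ : Measure Ω) (x : Ω) : ℝ≥0∞ := ∫⁻ y, K x y ∂μ

/-- The energy of a measure `μ` with respect to a kernel `K`. -/
noncomputable def energy {Ω : Type*} [MeasurableSpace Ω] (K : Ω → Ω → ℝ≥0∞)
    (μ : Measure Ω) : ℝ≥0∞ := ∫⁻ x, ∫⁻ y, K x y ∂μ ∂μ

/-- The support of a Borel measure. -/
def msupp {Ω : Type*} [TopologicalSpace Ω] [MeasurableSpace Ω] (μ : Measure Ω) : Set Ω :=
  {x | ∀ V : Set Ω, IsOpen V → x ∈ V → 0 < μ V}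

/-!
Perturb `μ` towards a measure `ν` of finite energy: for `t ∈ [0, 1]`,
`I((1 - t) μ + t ν) = (1 - t)² I(μ) + 2 t (1 - t) ∫ U^μ dν + t² I(ν)`,
whose derivative at `t = 0` is `2 (∫ U^μ dν - I(μ))`. If `ν` lives where `U^μ < I(μ)`, this is
negative, so small perturbations lower the energy, contradicting minimality.
-/

lemma msupp_eq_support {Ω : Type*} [TopologicalSpace Ω] [MeasurableSpace Ω] (μ : Measure Ω) :
    msupp μ = μ.support := by
  rw [Measure.support_eq_forall_isOpen]
  ext x
  exact forall_congr' fun V => Imp.swap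

lemma msupp_mem_ae {Ω : Type*} [TopologicalSpace Ω] [HereditarilyLindelofSpace Ω]
    [MeasurableSpace Ω] (μ : Measure Ω) : msupp μ ∈ ae μ :=
  msupp_eq_support μ ▸ Measure.support_mem_ae

lemma lintegral_lt_of_ae_lt_const {Ω : Type*} [MeasurableSpace Ω] {ν : Measure Ω}
    [IsProbabilityMeasure ν] {f : Ω → ℝ≥0∞} {c : ℝ≥0∞} (hc : c ≠ ⊤)
    (h : ∀ᵐ x ∂ν, f x < c) : ∫⁻ x, f x ∂ν < c := by
  have hle : ∫⁻ x, f x ∂ν ≤ c := by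
    simpa using lintegral_mono_ae (h.mono fun _ hx => hx.le) (g := fun _ => c)
  simpa using lintegral_strict_mono (IsProbabilityMeasure.ne_zero ν) aemeasurable_const
    (ne_top_of_le_ne_top hc hle) h

lemma exists_mem_Icc_quadratic_lt {a b : ℝ} (hba : b < a) (c : ℝ) :
    ∃ s ∈ Icc (0 : ℝ) 1, (1 - s) ^ 2 * a + 2 * (1 - s) * s * b + s ^ 2 * c < a := by
  set d := a - 2 * b + c
  set s := min 1 ((a - b) / (|d| + 1))
  have hab : 0 < a - b := sub_pos.2 hba
  have hd : 0 < |d| + 1 := by positivity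
  have hs : 0 < s := lt_min one_pos (div_pos hab hd)
  have hsd : s * d < a - b :=
    calc s * d ≤ (a - b) / (|d| + 1) * |d| :=
          (mul_le_mul_of_nonneg_left (le_abs_self d) hs.le).trans
            (mul_le_mul_of_nonneg_right (min_le_right _ _) (abs_nonneg d))
      _ < (a - b) / (|d| + 1) * (|d| + 1) := by gcongr; linarith
      _ = a - b := div_mul_cancel₀ _ hd.ne'
  refine ⟨s, ⟨hs.le, min_le_left _ _⟩, ?_⟩
  have hexpand : (1 - s) ^ 2 * a + 2 * (1 - s) * s * b + s ^ 2 * c - a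
      = s * (2 * (b - a) + s * d) := by ring
  linarith [mul_neg_of_pos_of_neg hs (by linarith : 2 * (b - a) + s * d < 0)]

section Kernel

variable {Ω : Type*} [MeasurableSpace Ω] {K : Ω → Ω → ℝ≥0∞}

lemma measurable_pot (hK : Measurable (Function.uncurry K)) (μ : Measure Ω) [SFinite μ] :
    Measurable (pot K μ) :=
  hK.lintegral_prod_right

lemma lintegral_pot_comm (hsym : ∀ x y, K x y = K y x) (hK : Measurable (Function.uncurry K))
    (μ ν : Measure Ω) [SFinite μ] [SFinite ν] :
    ∫⁻ x, pot K ν x ∂μ = ∫⁻ x, pot K μ x ∂ν := by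
  simp only [pot]
  rw [lintegral_lintegral_swap hK.aemeasurable]
  exact lintegral_congr fun y => lintegral_congr fun x => hsym x y

lemma pot_smul_add_smul (μ ν : Measure Ω) (a b : ℝ≥0∞) (x : Ω) :
    pot K (a • μ + b • ν) x = a * pot K μ x + b * pot K ν x := by
  simp only [pot, lintegral_add_measure, lintegral_smul_measure, smul_eq_mul]

lemma energy_smul_add_smul (hsym : ∀ x y, K x y = K y x) (hK : Measurable (Function.uncurry K))
    (μ ν : Measure Ω) [SFinite μ] [SFinite ν] (a b : ℝ≥0∞) :
    energy K (a • μ + b • ν) =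
      a ^ 2 * energy K μ + 2 * a * b * ∫⁻ x, pot K μ x ∂ν + b ^ 2 * energy K ν := by
  have hμ := measurable_pot hK μ
  have hν := measurable_pot hK ν
  calc energy K (a • μ + b • ν)
      = ∫⁻ x, (a * pot K μ x + b * pot K ν x) ∂(a • μ + b • ν) :=
        lintegral_congr fun x => pot_smul_add_smul μ ν a b x
    _ = a * (a * energy K μ + b * ∫⁻ x, pot K μ x ∂ν)
          + b * (a * ∫⁻ x, pot K ν x ∂μ + b * energy K ν) := by
        simp only [lintegral_add_measure, lintegral_smul_measure, smul_eq_mul,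
          lintegral_add_left (hμ.const_mul a), lintegral_const_mul _ hμ,
          lintegral_const_mul _ hν]
        rfl
    _ = _ := by
        rw [lintegral_pot_comm hsym hK μ ν]
        ring

theorem exists_isProbabilityMeasure_energy_lt (hsym : ∀ x y, K x y = K y x)
    (hK : Measurable (Function.uncurry K)) {μ ν : Measure Ω} [IsProbabilityMeasure μ]
    [IsProbabilityMeasure ν] (hμ : energy K μ ≠ ⊤) (hν : energy K ν ≠ ⊤)
    (hlt : ∫⁻ x, pot K μ x ∂ν < energy K μ) :
    ∃ σ : Measure Ω, IsProbabilityMeasure σ ∧ energy K σ < energy K μ := by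
  have hM : ∫⁻ x, pot K μ x ∂ν ≠ ⊤ := hlt.ne_top
  have hlt_real := (toReal_lt_toReal hM hμ).2 hlt
  obtain ⟨s, ⟨hs0, hs1⟩, hs⟩ := exists_mem_Icc_quadratic_lt hlt_real (energy K ν).toReal
  have h1s : 0 ≤ 1 - s := sub_nonneg.2 hs1
  refine ⟨ENNReal.ofReal (1 - s) • μ + ENNReal.ofReal s • ν, ⟨?_⟩, ?_⟩
  · simp [← ofReal_add h1s hs0]
  rw [energy_smul_add_smul hsym hK, ← ofReal_toReal hμ, ← ofReal_toReal hM, ← ofReal_toReal hν]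
  calc _ = ENNReal.ofReal ((1 - s) ^ 2 * (energy K μ).toReal
          + 2 * (1 - s) * s * (∫⁻ x, pot K μ x ∂ν).toReal + s ^ 2 * (energy K ν).toReal) := by
        simp (disch := positivity) only [ofReal_add, ofReal_mul, ofReal_pow, ofReal_ofNat]
    _ < _ := (ofReal_lt_ofReal_iff (toReal_nonneg.trans_lt hlt_real)).2 hs

end Kernel

theorem exceptional_set_capacity_zero_general
    {Ω : Type*} [MetricSpace Ω] [CompactSpace Ω]
    [MeasurableSpace Ω] [BorelSpace Ω]
    (K : Ω → Ω → ℝ≥0∞) (hsym : ∀ x y, K x y = K y x)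
    (hKcont : Continuous (Function.uncurry K))
    (μ : Measure Ω) [IsProbabilityMeasure μ]
    (hmin : ∀ ν : Measure Ω, IsProbabilityMeasure ν → energy K μ ≤ energy K ν) :
    ∀ ν : Measure Ω, IsProbabilityMeasure ν →
      msupp ν ⊆ {x | pot K μ x < energy K μ} → energy K ν = ⊤ := by
  intro ν hν hsupp
  by_contra hν_fin
  have hμ_fin : energy K μ ≠ ⊤ := ne_top_of_le_ne_top hν_fin (hmin ν hν)
  have hlt : ∫⁻ x, pot K μ x ∂ν < energy K μ :=
    lintegral_lt_of_ae_lt_const hμ_fin (Filter.mem_of_superset (msupp_mem_ae ν) hsupp)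
  obtain ⟨σ, hσ, hσμ⟩ :=
    exists_isProbabilityMeasure_energy_lt hsym hKcont.measurable hμ_fin hν_fin hlt
  exact (hmin σ hσ).not_gt hσμ

/-- If `μ` is an energy-minimizing probability measure of finite energy for a symmetric
extended-continuous kernel on a compact metric space, then the set where its potential is
strictly below its energy has capacity zero: every probability measure supported in this
set has infinite energy. -/
theorem exceptional_set_capacity_zero
    {Ω : Type*} [MetricSpace Ω] [CompactSpace Ω]
    [MeasurableSpace Ω] [BorelSpace Ω]
    (K : Ω → Ω → ℝ≥0∞) (hsym : ∀ x y, K x y = K y x)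
    (hKcont : Continuous (Function.uncurry K))
    (μ : Measure Ω) [IsProbabilityMeasure μ]
    (hmin : ∀ ν : Measure Ω, IsProbabilityMeasure ν → energy K μ ≤ energy K ν)
    (hfin : energy K μ ≠ ⊤) :
    ∀ ν : Measure Ω, IsProbabilityMeasure ν →
      msupp ν ⊆ {x | pot K μ x < energy K μ} → energy K ν = ⊤ :=
  exceptional_set_capacity_zero_general K hsym hKcont μ hmin
end

section
/- On the flat d-torus 𝕋^d, for every s < −2 a Borel probability measure μ minimizes the Riesz energy I_{K_s}(μ) = −∫∫ ρ(x,y)^{-s} dμ(x) dμ(y) if and only if μ = ½(δ_p + δ_q) where q is the unique point of 𝕋^d at distance diam(𝕋^d) from p (the antipodal point in every coordinate). -/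
/-!
Write `r = -s > 2`, `D = diam 𝕋^d = √d π`. Since `ρ ≤ D`, `ρ^r ≤ D^(r-2) ρ²`, with equality only
when `ρ ∈ {0, D}`. Coordinatewise, Jordan's inequality gives `dist² ≤ (π²/2)(1 - cos dist)`, and
`cos (x - y) = cos x cos y + sin x sin y` makes `∫∫ cos (xᵢ - yᵢ) dμ dμ = (∫ cos xᵢ)² + (∫ sin xᵢ)²`
nonnegative, so `∫∫ ρ² ≤ dπ²/2 = D²/2` and `∫∫ ρ^r ≤ D^r/2` for every probability measure.
The antipodal pair `½(δ_p + δ_p̄)` attains this bound. For a minimizer both inequalities are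
equalities, so `μ ⊗ μ`-almost every `(x, y)` has `y ∈ {x, x̄}`; hence `μ = a δ_p + b δ_p̄` for some
`p`, and its energy `2ab D^r = D^r/2` with `a + b = 1` forces `a = b = ½`.
-/

open MeasureTheory Set ENNReal

noncomputable section

instance : Fact (0 < 2 * Real.pi) := ⟨by positivity⟩

/-- The flat `d`-torus `(ℝ/2πℤ)^d = (𝕊¹)^d`. -/
abbrev Torus (d : ℕ) := Fin d → AddCircle (2 * Real.pi)

/-- The flat (Euclidean quotient) metric on the torus. -/
def tdist {d : ℕ} (x y : Torus d) : ℝ := Real.sqrt (∑ i, dist (x i) (y i) ^ 2)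

/-- The Riesz energy for `s < 0`: `I_s(μ) = −∫∫ ρ(x,y)^{-s} dμ dμ`. -/
def negRieszEnergy {d : ℕ} (s : ℝ) (μ : Measure (Torus d)) : ℝ :=
  -∫ x, ∫ y, tdist x y ^ (-s) ∂μ ∂μ

open Real

lemma Real.sq_le_mul_one_sub_cos {t : ℝ} (ht : |t| ≤ π) : t ^ 2 ≤ π ^ 2 / 2 * (1 - cos t) := by
  have hsin : 2 / π * (|t| / 2) ≤ sin (|t| / 2) := mul_le_sin (by positivity) (by linarith)
  have habs : |t| ≤ π * sin (|t| / 2) :=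
    calc |t| = π * (2 / π * (|t| / 2)) := by field_simp
      _ ≤ π * sin (|t| / 2) := by gcongr
  have hcos : cos t = 1 - 2 * sin (|t| / 2) ^ 2 := by
    rw [← cos_abs, ← cos_two_mul_eq_one_sub]; ring_nf
  rw [hcos, ← sq_abs t]
  nlinarith [abs_nonneg t]

lemma Real.rpow_eq_rpow_sub_two_mul_sq {t r : ℝ} (ht : 0 ≤ t) (hr : r ≠ 0) :
    t ^ r = t ^ (r - 2) * t ^ 2 := by
  rw [← Real.rpow_two, ← rpow_add' ht (by simpa using hr), sub_add_cancel]

lemma Real.rpow_le_mul_sq {t D r : ℝ} (ht : 0 ≤ t) (htD : t ≤ D) (hr : 2 ≤ r) :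
    t ^ r ≤ D ^ (r - 2) * t ^ 2 := by
  rw [rpow_eq_rpow_sub_two_mul_sq ht (by linarith)]
  gcongr

lemma Real.rpow_lt_mul_sq {t D r : ℝ} (ht : 0 < t) (htD : t < D) (hr : 2 < r) :
    t ^ r < D ^ (r - 2) * t ^ 2 := by
  rw [rpow_eq_rpow_sub_two_mul_sq ht.le (by linarith)]
  gcongr

lemma Continuous.integrable_of_compactSpace {X E : Type*} [TopologicalSpace X] [CompactSpace X]
    [MeasurableSpace X] [OpensMeasurableSpace X] [NormedAddCommGroup E] {μ : Measure X}
    [IsFiniteMeasure μ] {f : X → E} (hf : Continuous f) : Integrable f μ :=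
  hf.integrable_of_hasCompactSupport (.of_compactSpace f)

lemma MeasureTheory.Measure.eq_smul_dirac_add_smul_dirac {X : Type*} [MeasurableSpace X]
    [MeasurableSingletonClass X] {μ : Measure X} {p q : X} (hpq : p ≠ q)
    (h : ∀ᵐ x ∂μ, x = p ∨ x = q) :
    μ = μ {p} • Measure.dirac p + μ {q} • Measure.dirac q := by
  rw [← Measure.restrict_singleton, ← Measure.restrict_singleton,
    ← Measure.restrict_union (disjoint_singleton.mpr hpq) (measurableSet_singleton q)]
  exact (Measure.restrict_eq_self_of_ae_mem (by simpa [or_comm] using h)).symm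

lemma integral_smul_dirac_add_smul_dirac {X : Type*} [MeasurableSpace X]
    [MeasurableSingletonClass X] {a b : ℝ≥0∞} (ha : a ≠ ∞) (hb : b ≠ ∞) (p q : X) (g : X → ℝ) :
    ∫ x, g x ∂(a • Measure.dirac p + b • Measure.dirac q) = a.toReal * g p + b.toReal * g q := by
  rw [integral_add_measure ((integrable_dirac enorm_lt_top).smul_measure ha)
      ((integrable_dirac enorm_lt_top).smul_measure hb),
    integral_smul_measure, integral_smul_measure, integral_dirac, integral_dirac, smul_eq_mul,
    smul_eq_mul]

lemma Real.Angle.cos_sub (θ ψ : Angle) : cos (θ - ψ) = cos θ * cos ψ + sin θ * sin ψ := by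
  rw [sub_eq_add_neg, Angle.cos_add, Angle.cos_neg, Angle.sin_neg]
  ring

namespace AddCircle

lemma norm_eq_abs_toReal (θ : AddCircle (2 * π)) : ‖θ‖ = |Angle.toReal θ| := by
  have h := (norm_coe_eq_abs_iff (p := 2 * π) (x := Angle.toReal θ) (by positivity)).mpr
    (by rw [abs_of_pos two_pi_pos, mul_div_cancel_left₀ _ two_ne_zero]
        exact Angle.abs_toReal_le_pi θ)
  conv_lhs => rw [← Angle.coe_toReal θ]
  exact h

lemma neg_coe_pi : -((π : ℝ) : AddCircle (2 * π)) = (π : ℝ) :=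
  Angle.neg_coe_pi

lemma dist_le_pi (θ ψ : AddCircle (2 * π)) : dist θ ψ ≤ π := by
  rw [dist_eq_norm, norm_eq_abs_toReal]
  exact Angle.abs_toReal_le_pi _

lemma dist_add_pi (θ : AddCircle (2 * π)) : dist θ (θ + (π : ℝ)) = π := by
  have hhalf : ((π : ℝ) : AddCircle (2 * π)) = ((2 * π / 2 : ℝ) : AddCircle (2 * π)) := by
    norm_num
  rw [dist_eq_norm, sub_add_cancel_left, norm_neg, hhalf, norm_half_period_eq,
    abs_of_pos two_pi_pos]
  ring

lemma eq_add_pi_of_dist_eq_pi {θ ψ : AddCircle (2 * π)} (h : dist θ ψ = π) : ψ = θ + (π : ℝ) := by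
  rw [dist_eq_norm, norm_eq_abs_toReal] at h
  have hpi : θ - ψ = (π : ℝ) := by
    rcases abs_eq pi_pos.le |>.mp h with h | h
    · exact Angle.toReal_eq_pi_iff.mp h
    · linarith [Angle.neg_pi_lt_toReal (θ - ψ)]
  rw [← neg_coe_pi, ← hpi, neg_sub, add_sub_cancel]

lemma cos_dist (θ ψ : AddCircle (2 * π)) :
    cos (dist θ ψ) = Angle.cos θ * Angle.cos ψ + Angle.sin θ * Angle.sin ψ := by
  rw [dist_eq_norm, norm_eq_abs_toReal, cos_abs]
  exact (Angle.cos_toReal _).trans (Angle.cos_sub θ ψ)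

lemma integral_cos_dist_nonneg {X : Type*} [TopologicalSpace X] [CompactSpace X]
    [MeasurableSpace X] [OpensMeasurableSpace X] (μ : Measure X) [IsFiniteMeasure μ]
    {f : X → AddCircle (2 * π)} (hf : Continuous f) :
    0 ≤ ∫ z, cos (dist (f z.1) (f z.2)) ∂μ.prod μ := by
  have hcos : Integrable (fun x => Angle.cos (f x)) μ :=
    (Angle.continuous_cos.comp hf).integrable_of_compactSpace
  have hsin : Integrable (fun x => Angle.sin (f x)) μ :=
    (Angle.continuous_sin.comp hf).integrable_of_compactSpace
  simp_rw [cos_dist]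
  rw [integral_add (hcos.mul_prod hcos) (hsin.mul_prod hsin),
    integral_prod_mul (L := ℝ) (fun x => Angle.cos (f x)) (fun x => Angle.cos (f x)),
    integral_prod_mul (L := ℝ) (fun x => Angle.sin (f x)) (fun x => Angle.sin (f x))]
  exact add_nonneg (mul_self_nonneg _) (mul_self_nonneg _)

end AddCircle

namespace Torus

variable {d : ℕ}

def diam (d : ℕ) : ℝ := √(d * π ^ 2)

def antipode (x : Torus d) : Torus d := x + fun _ => ((π : ℝ) : AddCircle (2 * π))

lemma diam_sq (d : ℕ) : diam d ^ 2 = d * π ^ 2 :=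
  sq_sqrt (by positivity)

lemma diam_pos (hd : 1 ≤ d) : 0 < diam d :=
  sqrt_pos.mpr (mul_pos (by exact_mod_cast hd) (by positivity))

lemma diam_nonneg (d : ℕ) : 0 ≤ diam d :=
  sqrt_nonneg _

lemma sum_const_pi_sq : ∑ _i : Fin d, π ^ 2 = d * π ^ 2 := by
  simp

lemma antipode_ne (hd : 1 ≤ d) (x : Torus d) : antipode x ≠ x := by
  intro h
  have h0 := congrFun h ⟨0, hd⟩
  simp only [antipode, Pi.add_apply, add_eq_left] at h0
  exact Angle.pi_ne_zero h0

end Torus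

open Torus

section Distance

variable {d : ℕ}

lemma tdist_comm (x y : Torus d) : tdist x y = tdist y x := by
  simp only [tdist, dist_comm]

lemma tdist_self (x : Torus d) : tdist x x = 0 := by
  simp [tdist]

lemma tdist_nonneg (x y : Torus d) : 0 ≤ tdist x y :=
  sqrt_nonneg _

lemma tdist_sq (x y : Torus d) : tdist x y ^ 2 = ∑ i, dist (x i) (y i) ^ 2 :=
  sq_sqrt (by positivity)

lemma dist_sq_le_pi_sq (θ ψ : AddCircle (2 * π)) : dist θ ψ ^ 2 ≤ π ^ 2 := by
  gcongr
  exact AddCircle.dist_le_pi θ ψ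

lemma tdist_le_diam (x y : Torus d) : tdist x y ≤ diam d := by
  rw [tdist, diam, ← sum_const_pi_sq]
  gcongr with i
  exact AddCircle.dist_le_pi _ _

lemma tdist_antipode (x : Torus d) : tdist x (antipode x) = diam d := by
  simp only [tdist, diam, ← sum_const_pi_sq, antipode, Pi.add_apply, AddCircle.dist_add_pi]

lemma eq_of_tdist_eq_zero {x y : Torus d} (h : tdist x y = 0) : y = x := by
  rw [tdist, sqrt_eq_zero (by positivity),
    Finset.sum_eq_zero_iff_of_nonneg fun i _ => by positivity] at h
  funext i
  exact (dist_eq_zero.mp (pow_eq_zero_iff two_ne_zero |>.mp (h i (Finset.mem_univ i)))).symm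

lemma eq_antipode_of_tdist_eq_diam {x y : Torus d} (h : tdist x y = diam d) :
    y = antipode x := by
  rw [tdist, diam, ← sum_const_pi_sq, sqrt_inj (by positivity) (by positivity),
    Finset.sum_eq_sum_iff_of_le fun i _ => dist_sq_le_pi_sq _ _] at h
  funext i
  exact AddCircle.eq_add_pi_of_dist_eq_pi <|
    (pow_left_inj₀ dist_nonneg pi_pos.le two_ne_zero).mp (h i (Finset.mem_univ i))

lemma continuous_tdist : Continuous fun z : Torus d × Torus d => tdist z.1 z.2 := by
  unfold tdist
  fun_prop

end Distance

section Energy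

variable {d : ℕ} (ν : Measure (Torus d))

lemma integrable_tdist_rpow [IsFiniteMeasure ν] {r : ℝ} (hr : 0 ≤ r) :
    Integrable (fun z : Torus d × Torus d => tdist z.1 z.2 ^ r) (ν.prod ν) :=
  (continuous_tdist.rpow_const fun _ => Or.inr hr).integrable_of_compactSpace

lemma integrable_mul_tdist_sq [IsFiniteMeasure ν] (c : ℝ) :
    Integrable (fun z : Torus d × Torus d => c * tdist z.1 z.2 ^ 2) (ν.prod ν) :=
  (continuous_const.mul (continuous_tdist.pow 2)).integrable_of_compactSpace

lemma integral_tdist_sq_le [IsProbabilityMeasure ν] :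
    ∫ z, tdist z.1 z.2 ^ 2 ∂ν.prod ν ≤ diam d ^ 2 / 2 := by
  have hcos (i : Fin d) : Integrable (fun z : Torus d × Torus d => cos (dist (z.1 i) (z.2 i)))
      (ν.prod ν) := by
    refine Continuous.integrable_of_compactSpace ?_
    fun_prop
  have hterm (i : Fin d) : Integrable (fun z : Torus d × Torus d =>
      π ^ 2 / 2 * (1 - cos (dist (z.1 i) (z.2 i)))) (ν.prod ν) :=
    ((integrable_const 1).sub (hcos i)).const_mul _
  calc ∫ z, tdist z.1 z.2 ^ 2 ∂ν.prod ν
      ≤ ∫ z, ∑ i, π ^ 2 / 2 * (1 - cos (dist (z.1 i) (z.2 i))) ∂ν.prod ν := by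
        refine integral_mono (by simpa using integrable_mul_tdist_sq ν 1)
          (integrable_finsetSum _ fun i _ => hterm i) fun z => ?_
        rw [tdist_sq]
        gcongr with i
        exact sq_le_mul_one_sub_cos ((abs_of_nonneg dist_nonneg).trans_le (AddCircle.dist_le_pi _ _))
    _ = ∑ i : Fin d, π ^ 2 / 2 * (1 - ∫ z, cos (dist (z.1 i) (z.2 i)) ∂ν.prod ν) := by
        rw [integral_finsetSum _ fun i _ => hterm i]
        congr! 1 with i
        rw [integral_const_mul, integral_sub (integrable_const 1) (hcos i), integral_const]
        simp
    _ ≤ ∑ _i : Fin d, π ^ 2 / 2 := by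
        refine Finset.sum_le_sum fun i _ => mul_le_of_le_one_right (by positivity) ?_
        linarith [AddCircle.integral_cos_dist_nonneg ν (continuous_apply i)]
    _ = diam d ^ 2 / 2 := by
        rw [← Finset.sum_div, sum_const_pi_sq, diam_sq]

lemma integral_tdist_rpow_le_integral_mul_sq [IsFiniteMeasure ν] {r : ℝ} (hr : 2 ≤ r) :
    ∫ z, tdist z.1 z.2 ^ r ∂ν.prod ν ≤ ∫ z, diam d ^ (r - 2) * tdist z.1 z.2 ^ 2 ∂ν.prod ν :=
  integral_mono (integrable_tdist_rpow ν (by linarith)) (integrable_mul_tdist_sq ν _) fun z =>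
    rpow_le_mul_sq (tdist_nonneg _ _) (tdist_le_diam _ _) hr

lemma integral_mul_tdist_sq_le [IsProbabilityMeasure ν] {r : ℝ} (hr : 2 ≤ r) :
    ∫ z, diam d ^ (r - 2) * tdist z.1 z.2 ^ 2 ∂ν.prod ν ≤ diam d ^ r / 2 := by
  rw [integral_const_mul, rpow_eq_rpow_sub_two_mul_sq (diam_nonneg d) (by linarith : r ≠ 0),
    mul_div_assoc]
  exact mul_le_mul_of_nonneg_left (integral_tdist_sq_le ν) (rpow_nonneg (diam_nonneg d) _)

lemma negRieszEnergy_eq_neg_integral_prod [IsFiniteMeasure ν] {s : ℝ} (hs : s ≤ 0) :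
    negRieszEnergy s ν = -∫ z, tdist z.1 z.2 ^ (-s) ∂ν.prod ν :=
  congrArg Neg.neg (integral_integral (integrable_tdist_rpow ν (by linarith)))

lemma neg_diam_rpow_div_two_le_negRieszEnergy [IsProbabilityMeasure ν] {s : ℝ} (hs : s ≤ -2) :
    -(diam d ^ (-s) / 2) ≤ negRieszEnergy s ν := by
  rw [negRieszEnergy_eq_neg_integral_prod ν (by linarith), neg_le_neg_iff]
  exact (integral_tdist_rpow_le_integral_mul_sq ν (by linarith)).trans
    (integral_mul_tdist_sq_le ν (by linarith))

lemma ae_eq_or_eq_antipode_of_negRieszEnergy_eq [IsProbabilityMeasure ν] {s : ℝ} (hs : s < -2)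
    (h : negRieszEnergy s ν = -(diam d ^ (-s) / 2)) :
    ∀ᵐ z ∂ν.prod ν, z.2 = z.1 ∨ z.2 = antipode z.1 := by
  rw [negRieszEnergy_eq_neg_integral_prod ν (by linarith), neg_inj] at h
  have hr : 2 < -s := by linarith
  have heq := le_antisymm (integral_tdist_rpow_le_integral_mul_sq ν hr.le)
    (h ▸ integral_mul_tdist_sq_le ν hr.le)
  have hae := (integral_eq_iff_of_ae_le (integrable_tdist_rpow ν (by linarith))
    (integrable_mul_tdist_sq ν _) (ae_of_all _ fun z =>
      rpow_le_mul_sq (tdist_nonneg _ _) (tdist_le_diam _ _) hr.le)).mp heq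
  filter_upwards [hae] with z hz
  by_contra! hne
  have hpos := (tdist_nonneg z.1 z.2).lt_of_ne' fun h0 => hne.1 (eq_of_tdist_eq_zero h0)
  have hlt := (tdist_le_diam z.1 z.2).lt_of_ne fun hD => hne.2 (eq_antipode_of_tdist_eq_diam hD)
  exact (rpow_lt_mul_sq hpos hlt hr).ne hz

end Energy

namespace Torus

variable {d : ℕ}

def antipodalPair (p : Torus d) : Measure (Torus d) :=
  (2⁻¹ : ℝ≥0∞) • (Measure.dirac p + Measure.dirac (antipode p))

instance (p : Torus d) : IsProbabilityMeasure (antipodalPair p) :=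
  ⟨by simp [antipodalPair, ENNReal.inv_two_add_inv_two]⟩

lemma negRieszEnergy_smul_dirac_add_smul_dirac_antipode {s : ℝ} (hs : s < 0) {a b : ℝ≥0∞}
    (ha : a ≠ ∞) (hb : b ≠ ∞) (p : Torus d) :
    negRieszEnergy s (a • Measure.dirac p + b • Measure.dirac (antipode p)) =
      -(2 * a.toReal * b.toReal * diam d ^ (-s)) := by
  simp only [negRieszEnergy, integral_smul_dirac_add_smul_dirac ha hb, tdist_self,
    tdist_antipode, tdist_comm (antipode p), zero_rpow (by linarith : -s ≠ 0)]
  ring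

lemma negRieszEnergy_antipodalPair {s : ℝ} (hs : s < 0) (p : Torus d) :
    negRieszEnergy s (antipodalPair p) = -(diam d ^ (-s) / 2) := by
  rw [antipodalPair, smul_add,
    negRieszEnergy_smul_dirac_add_smul_dirac_antipode hs (by simp) (by simp)]
  norm_num
  ring

lemma smul_dirac_add_smul_dirac_antipode_eq_antipodalPair (hd : 1 ≤ d) {s : ℝ} (hs : s < 0)
    {a b : ℝ≥0∞} {p : Torus d} (hab : a + b = 1)
    (h : negRieszEnergy s (a • Measure.dirac p + b • Measure.dirac (antipode p)) =
      -(diam d ^ (-s) / 2)) :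
    a • Measure.dirac p + b • Measure.dirac (antipode p) = antipodalPair p := by
  have ha : a ≠ ∞ := ne_top_of_le_ne_top one_ne_top (hab ▸ le_self_add)
  have hb : b ≠ ∞ := ne_top_of_le_ne_top one_ne_top (hab ▸ le_add_self)
  have hsum : a.toReal + b.toReal = 1 := by rw [← toReal_add ha hb, hab, toReal_one]
  rw [negRieszEnergy_smul_dirac_add_smul_dirac_antipode hs ha hb, neg_inj] at h
  have hprod : 4 * (a.toReal * b.toReal) = 1 :=
    mul_right_cancel₀ (rpow_pos_of_pos (diam_pos hd) (-s)).ne' (by linarith)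
  have ha' : a.toReal = 2⁻¹ := by nlinarith [sq_nonneg (a.toReal - b.toReal)]
  have hb' : b.toReal = 2⁻¹ := by linarith
  rw [antipodalPair, smul_add, ← ofReal_toReal ha, ← ofReal_toReal hb, ha', hb',
    ofReal_inv_of_pos two_pos, ofReal_ofNat]

end Torus

/-- On the flat `d`-torus, for every `s < −2` a probability measure minimizes the Riesz
`s`-energy iff it is the average of two Dirac masses at a point `p` and the unique point
at diameter distance from `p` (the point antipodal to `p` in every coordinate). -/
theorem riesz_lt_neg_two_minimizers_on_torus
    (d : ℕ) (hd : 1 ≤ d) (s : ℝ) (hs : s < -2)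
    (μ : Measure (Torus d)) [IsProbabilityMeasure μ] :
    (∀ ν : Measure (Torus d), IsProbabilityMeasure ν →
        negRieszEnergy s μ ≤ negRieszEnergy s ν) ↔
      (∃ p : Torus d,
        μ = (2⁻¹ : ℝ≥0∞) • (Measure.dirac p +
          Measure.dirac (p + fun _ => (Real.pi : AddCircle (2 * Real.pi))))) := by
  have hs₀ : s < 0 := by linarith
  constructor
  · intro hmin
    have hμ : negRieszEnergy s μ = -(diam d ^ (-s) / 2) :=
      le_antisymm (negRieszEnergy_antipodalPair hs₀ 0 ▸ hmin _ inferInstance)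
        (neg_diam_rpow_div_two_le_negRieszEnergy μ hs.le)
    obtain ⟨p, hp⟩ := (Measure.ae_ae_of_ae_prod
      (ae_eq_or_eq_antipode_of_negRieszEnergy_eq μ hs hμ)).exists
    have hμp := Measure.eq_smul_dirac_add_smul_dirac (antipode_ne hd p).symm hp
    refine ⟨p, hμp.trans (smul_dirac_add_smul_dirac_antipode_eq_antipodalPair hd hs₀ ?_ ?_)⟩
    · conv_rhs => rw [← measure_univ (μ := μ), hμp]
      simp
    · rwa [← hμp]
  · rintro ⟨p, rfl⟩ ν hν
    exact (negRieszEnergy_antipodalPair hs₀ p).trans_le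
      (neg_diam_rpow_div_two_le_negRieszEnergy ν hs.le)
end
end
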